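/- Let 𝒜 be a complex Banach algebra and let L₁, L₂ ∈ 𝒜 with L := L₁ + L₂. Then for every t ≥ 0, exp((t/2)L₁)·exp(t L₂)·exp((t/2)L₁) − exp(t L) = (1/2) ∫₀ᵗ ∫₀ˢ exp((s/2)L₁) · exp((s−u)L₂) · [ exp(u L₂)·exp(((s−u)/2)L₁) , [L₂, L₁] ] · exp((u/2)L₁) · exp((t−s)L) du ds (the exact local error representation for the second-order Strang splitting). -/

import Mathlib

/-!
Write `L = L₁ + L₂`, `A s = exp ((s/2) L₁)`, `B s = exp (s L₂)` and `M = L₁/2 + L₂`. The Strang product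
`S s = A s B s A s` satisfies `S' = S L + A [M, B A]`, so differentiating `s ↦ S s exp ((t-s) L)`
gives the Duhamel formula `S t - exp (t L) = ∫₀ᵗ A s [M, B s A s] exp ((t-s) L) ds`.
The commutator is again a boundary term: `u ↦ exp ((s-u) a) x exp (u a)` has derivative
`exp ((s-u) a) [x, a] exp (u a)`, hence `[x, exp (s a)] = ∫₀ˢ exp ((s-u) a) [x, a] exp (u a) du`.
Applied to `(a, x) = (L₁/2, 2 L₂)` and `(L₂, -L₁)`, both with `[x, a] = [L₂, L₁]`, and recombined
through `exp ((s-u) a) exp (u a) = exp (s a)`, this expresses `[M, B s A s]` as the inner integral.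
-/

open MeasureTheory NormedSpace

section

variable {𝒜 : Type*} [NormedRing 𝒜] [NormedAlgebra ℝ 𝒜]

theorem commute_exp_smul (x : 𝒜) (a : ℝ) : Commute x (exp (a • x)) :=
  ((Commute.refl x).smul_right a).exp_right

variable [CompleteSpace 𝒜]

theorem exp_add_smul (x : 𝒜) (a b : ℝ) : exp ((a + b) • x) = exp (a • x) * exp (b • x) := by
  let : NormedAlgebra ℚ 𝒜 := .restrictScalars ℚ ℝ 𝒜
  rw [add_smul, exp_add_of_commute (((Commute.refl x).smul_left a).smul_right b)]

@[fun_prop]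
theorem continuous_exp_smul_comp {f : ℝ → ℝ} (hf : Continuous f) (x : 𝒜) :
    Continuous fun u => exp (f u • x) :=
  (differentiable_exp_smul_const ℝ x).continuous.comp hf

theorem hasDerivAt_exp_smul_comp {f : ℝ → ℝ} {f' t : ℝ} (hf : HasDerivAt f f' t) (x : 𝒜) :
    HasDerivAt (fun u => exp (f u • x)) (f' • (exp (f t • x) * x)) t :=
  (hasDerivAt_exp_smul_const x (f t)).scomp t hf

theorem intervalIntegral.integral_const_mul_of_intervalIntegrable {f : ℝ → 𝒜} {a b : ℝ}
    (hf : IntervalIntegrable f volume a b) (c : 𝒜) :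
    ∫ u in a..b, c * f u = c * ∫ u in a..b, f u :=
  (ContinuousLinearMap.mul ℝ 𝒜 c).intervalIntegral_comp_comm hf

theorem intervalIntegral.integral_mul_const_of_intervalIntegrable {f : ℝ → 𝒜} {a b : ℝ}
    (hf : IntervalIntegrable f volume a b) (c : 𝒜) :
    ∫ u in a..b, f u * c = (∫ u in a..b, f u) * c :=
  ((ContinuousLinearMap.mul ℝ 𝒜).flip c).intervalIntegral_comp_comm hf

end

section

open intervalIntegral

variable {𝒜 : Type*} [NormedRing 𝒜] [NormedAlgebra ℝ 𝒜]

noncomputable def strangProduct (a b : 𝒜) (s : ℝ) : 𝒜 :=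
  exp ((s / 2) • a) * exp (s • b) * exp ((s / 2) • a)

theorem strangProduct_zero (a b : 𝒜) : strangProduct a b 0 = 1 := by
  simp [strangProduct]

variable [CompleteSpace 𝒜]

theorem integral_exp_smul_mul_commutator_mul_exp_smul (a x : 𝒜) (s : ℝ) :
    ∫ u in (0:ℝ)..s, exp ((s - u) • a) * (x * a - a * x) * exp (u • a)
      = x * exp (s • a) - exp (s • a) * x := by
  have hderiv (u : ℝ) : HasDerivAt (fun u => exp ((s - u) • a) * x * exp (u • a))
      (exp ((s - u) • a) * (x * a - a * x) * exp (u • a)) u := by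
    have h := ((hasDerivAt_exp_smul_comp ((hasDerivAt_id' u).const_sub s) a).mul_const x).fun_mul
      (hasDerivAt_exp_smul_const a u)
    convert h using 1
    rw [← (commute_exp_smul a u).eq]
    simp only [neg_one_smul]
    noncomm_ring
  rw [integral_eq_sub_of_hasDerivAt (fun u _ => hderiv u)
    ((by fun_prop : Continuous _).intervalIntegrable _ _)]
  simp

theorem sub_mul_exp_smul_eq_integral_of_hasDerivAt {U R : ℝ → 𝒜} {L : 𝒜}
    (hU : ∀ s, HasDerivAt U (U s * L + R s) s) (hR : Continuous R) (t : ℝ) :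
    U t - U 0 * exp (t • L) = ∫ s in (0:ℝ)..t, R s * exp ((t - s) • L) := by
  have hderiv (s : ℝ) : HasDerivAt (fun s => U s * exp ((t - s) • L))
      (R s * exp ((t - s) • L)) s := by
    convert (hU s).fun_mul (hasDerivAt_exp_smul_comp ((hasDerivAt_id' s).const_sub t) L) using 1
    rw [← (commute_exp_smul L (t - s)).eq]
    simp only [neg_one_smul]
    noncomm_ring
  rw [integral_eq_sub_of_hasDerivAt (fun s _ => hderiv s)
    ((hR.mul (by fun_prop)).intervalIntegrable _ _)]
  simp

theorem hasDerivAt_strangProduct (a b : 𝒜) (s : ℝ) :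
    HasDerivAt (strangProduct a b)
      (strangProduct a b s * (a + b)
        + exp ((s / 2) • a) * (((1 / 2 : ℝ) • a + b) * (exp (s • b) * exp ((s / 2) • a))
          - exp (s • b) * exp ((s / 2) • a) * ((1 / 2 : ℝ) • a + b))) s := by
  have hA := hasDerivAt_exp_smul_comp ((hasDerivAt_id' s).div_const 2) a
  refine ((hA.fun_mul (hasDerivAt_exp_smul_const b s)).fun_mul hA).congr_deriv ?_
  rw [← (commute_exp_smul b s).eq]
  simp only [strangProduct, mul_add, add_mul, mul_sub, smul_mul_assoc, mul_smul_comm, mul_assoc]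
  module

theorem commutator_exp_smul_mul_exp_half_smul_eq_integral (a b : 𝒜) (s : ℝ) :
    ((1 / 2 : ℝ) • a + b) * (exp (s • b) * exp ((s / 2) • a))
        - exp (s • b) * exp ((s / 2) • a) * ((1 / 2 : ℝ) • a + b)
      = (1 / 2 : ℝ) • ∫ u in (0:ℝ)..s, exp ((s - u) • b) *
          (exp (u • b) * exp (((s - u) / 2) • a) * (b * a - a * b)
            - (b * a - a * b) * (exp (u • b) * exp (((s - u) / 2) • a))) * exp ((u / 2) • a) := by
  set c := b * a - a * b with hc
  have hP := integral_exp_smul_mul_commutator_mul_exp_smul ((1 / 2 : ℝ) • a) ((2 : ℝ) • b) s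
  rw [show (2 : ℝ) • b * (1 / 2 : ℝ) • a - (1 / 2 : ℝ) • a * (2 : ℝ) • b = c by
    simp only [hc, smul_mul_smul_comm]; norm_num] at hP
  simp only [smul_smul, mul_one_div] at hP
  have hQ := integral_exp_smul_mul_commutator_mul_exp_smul b (-a) s
  rw [show -a * b - b * -a = c by rw [hc]; noncomm_ring] at hQ
  have hsplit (u : ℝ) : exp ((s - u) • b) *
      (exp (u • b) * exp (((s - u) / 2) • a) * c - c * (exp (u • b) * exp (((s - u) / 2) • a)))
        * exp ((u / 2) • a)
      = exp (s • b) * (exp (((s - u) / 2) • a) * c * exp ((u / 2) • a))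
        - exp ((s - u) • b) * c * exp (u • b) * exp ((s / 2) • a) := by
    have hb : exp (s • b) = exp ((s - u) • b) * exp (u • b) := by
      rw [← exp_add_smul, sub_add_cancel]
    have ha : exp ((s / 2) • a) = exp (((s - u) / 2) • a) * exp ((u / 2) • a) := by
      rw [← exp_add_smul]; ring_nf
    rw [hb, ha]
    noncomm_ring
  rw [integral_congr fun u _ => hsplit u, intervalIntegral.integral_sub,
    integral_const_mul_of_intervalIntegrable, integral_mul_const_of_intervalIntegrable, hP, hQ]
  · simp only [mul_add, add_mul, mul_sub, sub_mul, smul_mul_assoc, mul_smul_comm, mul_assoc,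
      neg_mul, mul_neg, smul_sub, smul_neg, (commute_exp_smul b s).left_comm,
      ← (commute_exp_smul a (s / 2)).eq]
    module
  all_goals exact (by fun_prop : Continuous _).intervalIntegrable _ _

end

theorem strang_exact_local_error_representation
    {𝒜 : Type*} [NormedRing 𝒜] [NormedAlgebra ℂ 𝒜] [CompleteSpace 𝒜]
    (L₁ L₂ : 𝒜) (t : ℝ) :
    exp ((t / 2) • L₁) * exp (t • L₂) * exp ((t / 2) • L₁)
        - exp (t • (L₁ + L₂)) =
      (1 / 2 : ℝ) • ∫ s in (0:ℝ)..t, ∫ u in (0:ℝ)..s,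
        exp ((s / 2) • L₁) * exp ((s - u) • L₂) *
          (exp (u • L₂) * exp (((s - u) / 2) • L₁) * (L₂ * L₁ - L₁ * L₂)
            - (L₂ * L₁ - L₁ * L₂) *
              (exp (u • L₂) * exp (((s - u) / 2) • L₁))) *
          exp ((u / 2) • L₁) * exp ((t - s) • (L₁ + L₂)) := by
  have hduhamel := sub_mul_exp_smul_eq_integral_of_hasDerivAt
    (hasDerivAt_strangProduct L₁ L₂) (by fun_prop) t
  rw [strangProduct_zero, one_mul] at hduhamel
  rw [← strangProduct, hduhamel, ← intervalIntegral.integral_smul]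
  refine intervalIntegral.integral_congr fun s _ => ?_
  rw [commutator_exp_smul_mul_exp_half_smul_eq_integral, mul_smul_comm, smul_mul_assoc,
    ← intervalIntegral.integral_const_mul_of_intervalIntegrable,
    ← intervalIntegral.integral_mul_const_of_intervalIntegrable]
  · simp only [mul_assoc]
  all_goals exact (by fun_prop : Continuous _).intervalIntegrable _ _
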